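/- arXiv:1102.4361 — 7 statements merged into one kernel-verified Lean document; each statement's English description precedes it below -/
import Mathlib

section
/- (Theorem 3.2, Euclidean case Q̄ = ℝ^n, so T*Q̄ = ℝ^n × ℝ^n with the canonical symplectic form.) Let X be a smooth vector field on ℝ^n × ℝ^n, let f: ℝ^n → ℝ be smooth and nowhere-vanishing, and let X_C be the Chaplygin-rescaled vector field. If X_C is symplectic, i.e. for every z and all u, v one has Ω(DX_C(z)[u], v) + Ω(u, DX_C(z)[v]) = 0 (the Lie derivative of Ω along X_C vanishes), then div(f^{n−1}X) = 0 identically; that is, X preserves the measure f(q)^{n−1} dq dp. -/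
noncomputable section

open Matrix

/-- Configuration vectors: points of `ℝⁿ`. -/
abbrev Vec (n : ℕ) : Type := Fin n → ℝ

/-- Phase space `ℝⁿ × ℝⁿ`, points `z = (q, p)`. -/
abbrev Phase (n : ℕ) : Type := Vec n × Vec n

/-- Canonical symplectic form `Ω(u,v) = ⟨u_q, v_p⟩ − ⟨u_p, v_q⟩`. -/
def Omega {n : ℕ} (u v : Phase n) : ℝ := u.1 ⬝ᵥ v.2 - u.2 ⬝ᵥ v.1

/-- Liouville one-form `Θ_z(v) = ⟨p, v_q⟩` at `z = (q,p)`. -/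
def Theta {n : ℕ} (z v : Phase n) : ℝ := z.2 ⬝ᵥ v.1

/-- Fiber scaling `Ψ_f(q,p) = (q, f(q)·p)`. -/
def Psi {n : ℕ} (f : Vec n → ℝ) (z : Phase n) : Phase n := (z.1, f z.1 • z.2)

/-- `Ψ_{1/f}`, the inverse of `Ψ_f`. -/
def PsiInv {n : ℕ} (f : Vec n → ℝ) : Phase n → Phase n := Psi fun q => (f q)⁻¹

/-- The Chaplygin-rescaled vector field
`X_C(z) := DΨ_f(Ψ_{1/f}(z))[(1/f(q))·X(Ψ_{1/f}(z))]`. -/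
def ChapRescale {n : ℕ} (f : Vec n → ℝ) (X : Phase n → Phase n) (z : Phase n) : Phase n :=
  fderiv ℝ (Psi f) (PsiInv f z) ((f z.1)⁻¹ • X (PsiInv f z))

/-- The two-form `df ∧ Θ`. -/
def dfTheta {n : ℕ} (f : Vec n → ℝ) (z u v : Phase n) : ℝ :=
  fderiv ℝ f z.1 u.1 * (z.2 ⬝ᵥ v.1) - fderiv ℝ f z.1 v.1 * (z.2 ⬝ᵥ u.1)

/-- Divergence of a vector field: `div Y (z) = trace DY(z)`. -/
def divergence {n : ℕ} (Y : Phase n → Phase n) (z : Phase n) : ℝ :=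
  LinearMap.trace ℝ (Phase n) (fderiv ℝ Y z).toLinearMap

/-!
`X_C` is the pushforward `Ψ_* Y` of `Y := X / f`. An infinitesimally symplectic linear map is
trace-free, since `Ω` pairs each `∂/∂qᵢ` with `∂/∂pᵢ`; so `div X_C = 0`. The fiber scaling `Ψ_f` has
Jacobian determinant `f(q)ⁿ`, hence `f(q)ⁿ · (div Ψ_* Y) ∘ Ψ = div (fⁿ Y)`, and for `Y = X / f` the
right-hand side is `div (fⁿ⁻¹ X)`.
-/

theorem LinearMap.trace_prod_eq_trace_add_trace {R M N : Type*} [CommRing R] [AddCommGroup M]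
    [Module R M] [Module.Free R M] [Module.Finite R M] [AddCommGroup N] [Module R N]
    [Module.Free R N] [Module.Finite R N] (L : M × N →ₗ[R] M × N) :
    trace R (M × N) L = trace R M (fst R M N ∘ₗ L ∘ₗ inl R M N)
      + trace R N (snd R M N ∘ₗ L ∘ₗ inr R M N) := by
  have hL : L = (L ∘ₗ inl R M N) ∘ₗ fst R M N + (L ∘ₗ inr R M N) ∘ₗ snd R M N := by
    ext <;> simp [Prod.mk_zero_zero]
  conv_lhs => rw [hL, map_add]
  rw [trace_comp_comm' (fst R M N), trace_comp_comm' (snd R M N)]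

theorem LinearMap.trace_pi_eq_sum {R ι : Type*} [CommRing R] [Fintype ι] [DecidableEq ι]
    (P : (ι → R) →ₗ[R] ι → R) : trace R (ι → R) P = ∑ i, P (Pi.single i 1) i := by
  rw [trace_eq_matrix_trace R (Pi.basisFun R ι), toMatrix_eq_toMatrix']
  simp [Matrix.trace, toMatrix'_apply]

theorem LinearMap.trace_comp_smulRight {R M : Type*} [CommRing R] [AddCommGroup M] [Module R M]
    [Module.Free R M] [Module.Finite R M] (T : M →ₗ[R] M) (φ : M →ₗ[R] R) (x : M) :
    trace R M (T ∘ₗ φ.smulRight x) = φ (T x) := by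
  have h : T ∘ₗ φ.smulRight x = φ.smulRight (T x) := by ext; simp
  rw [h, trace_smulRight]

theorem trace_eq_zero_of_infinitesimally_symplectic {n : ℕ} (L : Phase n →ₗ[ℝ] Phase n)
    (hL : ∀ u v, Omega (L u) v + Omega u (L v) = 0) : LinearMap.trace ℝ (Phase n) L = 0 := by
  rw [LinearMap.trace_prod_eq_trace_add_trace, LinearMap.trace_pi_eq_sum,
    LinearMap.trace_pi_eq_sum, ← Finset.sum_add_distrib]
  refine Finset.sum_eq_zero fun i _ => ?_
  simpa [Omega, dotProduct_single, single_dotProduct] using hL (Pi.single i 1, 0) (0, Pi.single i 1)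

theorem divergence_smul {n : ℕ} {φ : Phase n → ℝ} {Y : Phase n → Phase n} {z : Phase n}
    (hφ : DifferentiableAt ℝ φ z) (hY : DifferentiableAt ℝ Y z) :
    divergence (fun w => φ w • Y w) z = φ z * divergence Y z + fderiv ℝ φ z (Y z) := by
  rw [divergence, show (fun w => φ w • Y w) = φ • Y from rfl, fderiv_smul hφ hY]
  simp [divergence]

theorem divergence_eq_trace_add_trace {n : ℕ} {F : Phase n → Phase n} {z : Phase n}
    (hF : DifferentiableAt ℝ F z) :
    divergence F z = LinearMap.trace ℝ (Vec n) (fderiv ℝ (fun q => (F (q, z.2)).1) z.1).toLinearMap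
      + LinearMap.trace ℝ (Vec n) (fderiv ℝ (fun p => (F (z.1, p)).2) z.2).toLinearMap := by
  rw [divergence, LinearMap.trace_prod_eq_trace_add_trace,
    (hF.hasFDerivAt.comp z.1 (hasFDerivAt_prodMk_left z.1 z.2)).fst.fderiv,
    (hF.hasFDerivAt.comp z.2 (hasFDerivAt_prodMk_right z.1 z.2)).snd.fderiv]
  rfl

def psiPushforward {n : ℕ} (f : Vec n → ℝ) (Y : Phase n → Phase n) (z : Phase n) : Phase n :=
  fderiv ℝ (Psi f) (PsiInv f z) (Y (PsiInv f z))

theorem chapRescale_eq_psiPushforward {n : ℕ} (f : Vec n → ℝ) (X : Phase n → Phase n) :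
    ChapRescale f X = psiPushforward f (fun w => (f w.1)⁻¹ • X w) := rfl

theorem psiInv_psi {n : ℕ} {f : Vec n → ℝ} {w : Phase n} (hw : f w.1 ≠ 0) :
    PsiInv f (Psi f w) = w := by
  simp [PsiInv, Psi, smul_smul, inv_mul_cancel₀ hw]

theorem fderiv_psi_apply {n : ℕ} {f : Vec n → ℝ} {m : Phase n} (hf : DifferentiableAt ℝ f m.1)
    (v : Phase n) : fderiv ℝ (Psi f) m v = (v.1, f m.1 • v.2 + fderiv ℝ f m.1 v.1 • m.2) := by
  have h : HasFDerivAt (Psi f) _ m :=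
    hasFDerivAt_fst.prodMk ((hf.hasFDerivAt.comp m hasFDerivAt_fst).smul hasFDerivAt_snd)
  simp [h.fderiv]

theorem psiPushforward_apply {n : ℕ} {f : Vec n → ℝ} (hf : Differentiable ℝ f)
    (Y : Phase n → Phase n) (z : Phase n) :
    psiPushforward f Y z = ((Y (PsiInv f z)).1,
      f z.1 • (Y (PsiInv f z)).2 + (fderiv ℝ f z.1 (Y (PsiInv f z)).1 * (f z.1)⁻¹) • z.2) := by
  rw [psiPushforward, fderiv_psi_apply (hf _)]
  simp [PsiInv, Psi, smul_smul]

theorem divergence_psiPushforward {n : ℕ} {f : Vec n → ℝ} (hf : ContDiff ℝ 2 f)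
    (hf0 : ∀ q, f q ≠ 0) {Y : Phase n → Phase n} (hY : Differentiable ℝ Y) (z : Phase n) :
    divergence (psiPushforward f Y) z
      = divergence Y (PsiInv f z) + n * (f z.1)⁻¹ * fderiv ℝ f z.1 (Y (PsiInv f z)).1 := by
  have hf1 : Differentiable ℝ f := hf.differentiable (by norm_num)
  set g := f z.1
  set l := fderiv ℝ f z.1
  have hg : g ≠ 0 := hf0 _
  set M := fderiv ℝ Y (PsiInv f z) with hM_def
  have hM : HasFDerivAt Y M (PsiInv f z) := (hY _).hasFDerivAt
  have hF : DifferentiableAt ℝ (psiPushforward f Y) z := by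
    rw [show psiPushforward f Y = _ from funext (psiPushforward_apply hf1 Y)]
    simp only [PsiInv, Psi]
    fun_prop (disch := exact hf0 _)
  have hc : HasFDerivAt (fun q => (f q)⁻¹) (-(g ^ 2)⁻¹ • l) z.1 :=
    (hasDerivAt_inv (hf0 _)).comp_hasFDerivAt _ (hf1 _).hasFDerivAt
  have hq : HasFDerivAt (fun q => (psiPushforward f Y (q, z.2)).1)
      (ContinuousLinearMap.fst ℝ (Vec n) (Vec n) ∘L
        M ∘L (ContinuousLinearMap.id ℝ (Vec n)).prod ((-(g ^ 2)⁻¹ • l).smulRight z.2)) z.1 := by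
    simp only [psiPushforward_apply hf1, PsiInv, Psi]
    exact (hM.comp z.1 ((hasFDerivAt_id _).prodMk (hc.smul_const z.2))).fst
  set P : Vec n →L[ℝ] Phase n :=
    (0 : Vec n →L[ℝ] Vec n).prod (g⁻¹ • ContinuousLinearMap.id ℝ (Vec n))
  have hYP : HasFDerivAt (fun p => Y (z.1, g⁻¹ • p)) (M ∘L P) z.2 :=
    hM.comp z.2 ((hasFDerivAt_const _ _).prodMk ((hasFDerivAt_id z.2).const_smul g⁻¹))
  have hp : HasFDerivAt (fun p => (psiPushforward f Y (z.1, p)).2)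
      (g • (ContinuousLinearMap.snd ℝ (Vec n) (Vec n) ∘L M ∘L P)
        + ((l (Y (PsiInv f z)).1 * g⁻¹) • ContinuousLinearMap.id ℝ (Vec n)
          + (g⁻¹ • (l ∘L ContinuousLinearMap.fst ℝ (Vec n) (Vec n) ∘L M ∘L P)).smulRight z.2))
      z.2 := by
    simp only [psiPushforward_apply hf1, PsiInv, Psi]
    exact (hYP.snd.const_smul g).add
      (((l.hasFDerivAt.comp z.2 hYP.fst).mul_const g⁻¹).smul (hasFDerivAt_id z.2))
  have hP : (P : Vec n →ₗ[ℝ] Phase n) = g⁻¹ • LinearMap.inr ℝ (Vec n) (Vec n) := by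
    ext <;> simp [P]
  have hid : ∀ S : Vec n →ₗ[ℝ] Vec n, LinearMap.id.prod S
      = LinearMap.inl ℝ (Vec n) (Vec n) + LinearMap.inr ℝ (Vec n) (Vec n) ∘ₗ S := by
    intro S; ext <;> simp
  rw [divergence_eq_trace_add_trace hF, hq.fderiv, hp.fderiv, divergence,
    LinearMap.trace_prod_eq_trace_add_trace]
  -- the terms `∓ l (M (0, z.2)).1 / g²` from `∂_q (1/f)` and `∂_p (df(Y_q) • p / f)` cancel
  simp only [ContinuousLinearMap.toLinearMap_comp, ContinuousLinearMap.toLinearMap_add,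
    ContinuousLinearMap.toLinearMap_smul, ContinuousLinearMap.coe_prod, ContinuousLinearMap.coe_id,
    ContinuousLinearMap.coe_smulRight, ContinuousLinearMap.coe_fst, ContinuousLinearMap.coe_snd,
    hP, hid, LinearMap.comp_add, map_add, LinearMap.comp_smul, map_smul, ← LinearMap.comp_assoc,
    LinearMap.trace_comp_smulRight, LinearMap.trace_smulRight, LinearMap.trace_id,
    Module.finrank_fin_fun, LinearMap.smul_apply, LinearMap.comp_apply, smul_eq_mul, ← hM_def]
  field_simp
  ring

-- `f(q)ⁿ` is the Jacobian determinant of `Ψ_f`: this is the rule `J · (div Ψ_* Y) ∘ Ψ = div (J Y)`.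
theorem pow_mul_divergence_psiPushforward {n : ℕ} {f : Vec n → ℝ} (hf : ContDiff ℝ 2 f)
    (hf0 : ∀ q, f q ≠ 0) {Y : Phase n → Phase n} (hY : Differentiable ℝ Y) (w : Phase n) :
    f w.1 ^ n * divergence (psiPushforward f Y) (Psi f w)
      = divergence (fun v => f v.1 ^ n • Y v) w := by
  have hf1 : Differentiable ℝ f := hf.differentiable (by norm_num)
  have hpow : HasFDerivAt (fun v : Phase n => f v.1 ^ n)
      ((n * f w.1 ^ (n - 1)) • (fderiv ℝ f w.1 ∘L ContinuousLinearMap.fst ℝ _ _)) w :=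
    (hasDerivAt_pow n _).comp_hasFDerivAt w ((hf1 _).hasFDerivAt.comp w hasFDerivAt_fst)
  rw [divergence_psiPushforward hf hf0 hY, psiInv_psi (hf0 _),
    divergence_smul hpow.differentiableAt (hY w), hpow.fderiv]
  rcases n with _ | k
  · simp
  · simp only [pow_succ, Nat.cast_add, Nat.cast_one, Psi, add_tsub_cancel_right, smul_eq_mul,
      _root_.smul_apply, ContinuousLinearMap.comp_apply, ContinuousLinearMap.coe_fst']
    field_simp [hf0 w.1]

theorem statement0 (n : ℕ) (hn : 1 ≤ n) (X : Phase n → Phase n) (f : Vec n → ℝ)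
    (hX : ContDiff ℝ (⊤ : ℕ∞) X) (hf : ContDiff ℝ (⊤ : ℕ∞) f) (hf0 : ∀ q, f q ≠ 0)
    (hsymp : ∀ (z u v : Phase n),
      Omega (fderiv ℝ (ChapRescale f X) z u) v + Omega u (fderiv ℝ (ChapRescale f X) z v) = 0) :
    ∀ z : Phase n, divergence (fun w => f w.1 ^ (n - 1) • X w) z = 0 := by
  intro w
  have hf1 : Differentiable ℝ f := hf.differentiable (by simp)
  have hX1 : Differentiable ℝ X := hX.differentiable (by simp)
  have hY : Differentiable ℝ (fun v : Phase n => (f v.1)⁻¹ • X v) := by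
    fun_prop (disch := first | exact hf0 _ | exact fun _ => hf0 _)
  have hweight : (fun v : Phase n => f v.1 ^ (n - 1) • X v)
      = fun v => f v.1 ^ n • (f v.1)⁻¹ • X v := by
    funext v
    rw [smul_smul, pow_sub₀ _ (hf0 v.1) hn, pow_one]
  have hXC : divergence (ChapRescale f X) (Psi f w) = 0 :=
    trace_eq_zero_of_infinitesimally_symplectic _ (hsymp _)
  have hf2 : ContDiff ℝ 2 f := hf.of_le (WithTop.coe_le_coe.mpr le_top)
  rw [hweight, ← pow_mul_divergence_psiPushforward hf2 hf0 hY, ← chapRescale_eq_psiPushforward,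
    hXC, mul_zero]
end
end

section
/- (Lemma 3.8, Euclidean case Q̄ = ℝ^n.) Suppose the smooth vector field X on ℝ^n × ℝ^n satisfies the reduced Chaplygin equations i_X(Ω − Ξ) = dH, where Ξ is a fiber-linear semibasic two-form, and let f: ℝ^n → ℝ be smooth and nowhere-vanishing. Then the Chaplygin-rescaled vector field X_C satisfies, for all z = (q,p) and all v ∈ ℝ^n × ℝ^n: Ω(X_C(z), v) + (1/f(q))·[(df ∧ Θ)_z(X_C(z), v) − f(q)·Ξ_z(X_C(z), v)] = DH_C(z)[v], where H_C is the Chaplygin Hamiltonian. -/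
noncomputable section

open Matrix

/-- A fiber-linear semibasic two-form on phase space: a smooth assignment
`z ↦ Ξ_z` of alternating bilinear forms whose value depends only on the base
components of its arguments, and which is linear in the fiber variable `p`. -/
structure FiberLinearSemibasicTwoForm (n : ℕ) where
  form : Phase n → Phase n → Phase n → ℝ
  smooth : ∀ u v : Phase n, ContDiff ℝ (⊤ : ℕ∞) fun z => form z u v
  alt : ∀ z u v : Phase n, form z u v = - form z v u
  add_left : ∀ (z u u' v : Phase n), form z (u + u') v = form z u v + form z u' v
  smul_left : ∀ (z : Phase n) (c : ℝ) (u v : Phase n), form z (c • u) v = c * form z u v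
  semibasic : ∀ (z u v u' v' : Phase n), u.1 = u'.1 → v.1 = v'.1 → form z u v = form z u' v'
  fiber_add : ∀ (q p p' : Vec n) (u v : Phase n),
    form (q, p + p') u v = form (q, p) u v + form (q, p') u v
  fiber_smul : ∀ (q : Vec n) (c : ℝ) (p : Vec n) (u v : Phase n),
    form (q, c • p) u v = c * form (q, p) u v

/-!
Write `w = Ψ_{1/f}(z)` and `F = f(q)`. From `Ψ_f^* Θ = f Θ` and `Ω = -dΘ` we get
`Ψ_f^* Ω = f Ω - df ∧ Θ`, which in coordinates at `z` reads
`Ω(DΨ_f u, v) + F⁻¹ (df ∧ Θ)(DΨ_f u, v) = F Ω(u, DΨ_{1/f} v)`.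
A semibasic, fiber-linear `Ξ` only sees the base component of `DΨ_f u` and scales with the fiber,
so `Ξ_z(DΨ_f u, v) = F Ξ_w(u, v)`. With `u = F⁻¹ X(w)` the left-hand side becomes
`(Ω - Ξ)_w(X(w), DΨ_{1/f} v) = DH(w)[DΨ_{1/f} v]`, which is `DH_C(z)[v]` by the chain rule.
-/

variable {n : ℕ}

lemma Omega_smul_left (c : ℝ) (u v : Phase n) : Omega (c • u) v = c * Omega u v := by
  simp only [Omega, Prod.smul_fst, Prod.smul_snd, smul_dotProduct, smul_eq_mul, mul_sub]

lemma hasFDerivAt_Psi {g : Vec n → ℝ} {z : Phase n} (hg : DifferentiableAt ℝ g z.1) :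
    HasFDerivAt (Psi g)
      ((ContinuousLinearMap.fst ℝ (Vec n) (Vec n)).prod
        (g z.1 • ContinuousLinearMap.snd ℝ (Vec n) (Vec n)
          + ((fderiv ℝ g z.1).comp (ContinuousLinearMap.fst ℝ (Vec n) (Vec n))).smulRight z.2))
      z :=
  hasFDerivAt_fst.prodMk ((hg.hasFDerivAt.comp z hasFDerivAt_fst).smul hasFDerivAt_snd)

lemma fderiv_Psi_apply {g : Vec n → ℝ} {z : Phase n} (hg : DifferentiableAt ℝ g z.1)
    (v : Phase n) :
    fderiv ℝ (Psi g) z v = (v.1, g z.1 • v.2 + fderiv ℝ g z.1 v.1 • z.2) := by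
  rw [(hasFDerivAt_Psi hg).fderiv]
  simp

lemma fderiv_inv_apply {E : Type*} [NormedAddCommGroup E] [NormedSpace ℝ E]
    {f : E → ℝ} {x : E} (hf : DifferentiableAt ℝ f x) (hx : f x ≠ 0) (u : E) :
    fderiv ℝ (fun y => (f y)⁻¹) x u = -(f x ^ 2)⁻¹ * fderiv ℝ f x u := by
  change fderiv ℝ ((fun y => y⁻¹) ∘ f) x u = _
  rw [((hasDerivAt_inv hx).comp_hasFDerivAt x hf.hasFDerivAt).fderiv]
  simp [smul_eq_mul]

lemma fderiv_PsiInv_apply {f : Vec n → ℝ} {z : Phase n} (hf : DifferentiableAt ℝ f z.1)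
    (hz : f z.1 ≠ 0) (v : Phase n) :
    fderiv ℝ (PsiInv f) z v =
      (v.1, (f z.1)⁻¹ • v.2 - ((f z.1 ^ 2)⁻¹ * fderiv ℝ f z.1 v.1) • z.2) := by
  rw [PsiInv, fderiv_Psi_apply (g := fun q => (f q)⁻¹) (hf.inv hz), fderiv_inv_apply hf hz,
    neg_mul, neg_smul, ← sub_eq_add_neg]

lemma fderiv_Psi_PsiInv_apply {f : Vec n → ℝ} {z : Phase n} (hf : DifferentiableAt ℝ f z.1)
    (u : Phase n) :
    fderiv ℝ (Psi f) (PsiInv f z) u =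
      (u.1, f z.1 • u.2 + (f z.1)⁻¹ • fderiv ℝ f z.1 u.1 • z.2) := by
  rw [fderiv_Psi_apply (z := PsiInv f z) hf, smul_comm]
  rfl

lemma Omega_fderiv_Psi_add_dfTheta {f : Vec n → ℝ} {z : Phase n}
    (hf : DifferentiableAt ℝ f z.1) (hz : f z.1 ≠ 0) (u v : Phase n) :
    Omega (fderiv ℝ (Psi f) (PsiInv f z) u) v
        + (f z.1)⁻¹ * dfTheta f z (fderiv ℝ (Psi f) (PsiInv f z) u) v
      = f z.1 * Omega u (fderiv ℝ (PsiInv f) z v) := by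
  rw [fderiv_Psi_PsiInv_apply hf, fderiv_PsiInv_apply hf hz]
  simp only [Omega, dfTheta, add_dotProduct, dotProduct_sub, smul_dotProduct, dotProduct_smul,
    smul_eq_mul, dotProduct_comm u.1 z.2]
  field_simp
  ring

namespace FiberLinearSemibasicTwoForm

variable (Ξ : FiberLinearSemibasicTwoForm n)

lemma form_fderiv_Psi {f : Vec n → ℝ} {z : Phase n} (hf : DifferentiableAt ℝ f z.1)
    (hz : f z.1 ≠ 0) (u v : Phase n) :
    Ξ.form z (fderiv ℝ (Psi f) (PsiInv f z) u) v = f z.1 * Ξ.form (PsiInv f z) u v := by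
  have hscale := Ξ.fiber_smul z.1 (f z.1) ((f z.1)⁻¹ • z.2) u v
  rw [smul_inv_smul₀ hz] at hscale
  rw [Ξ.semibasic _ _ _ u v (by rw [fderiv_Psi_PsiInv_apply hf]) rfl]
  exact hscale

end FiberLinearSemibasicTwoForm

theorem statement2_general (n : ℕ) (X : Phase n → Phase n) (H : Phase n → ℝ)
    (Ξ : FiberLinearSemibasicTwoForm n) (f : Vec n → ℝ)
    (hH : ContDiff ℝ (⊤ : ℕ∞) H)
    (hf : ContDiff ℝ (⊤ : ℕ∞) f) (hf0 : ∀ q, f q ≠ 0)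
    (heq : ∀ (z v : Phase n), Omega (X z) v - Ξ.form z (X z) v = fderiv ℝ H z v) :
    ∀ (z v : Phase n),
      Omega (ChapRescale f X z) v
        + (f z.1)⁻¹ * (dfTheta f z (ChapRescale f X z) v
            - f z.1 * Ξ.form z (ChapRescale f X z) v)
      = fderiv ℝ (fun w => H (PsiInv f w)) z v := by
  intro z v
  have hfz : DifferentiableAt ℝ f z.1 := hf.differentiable (by norm_num) z.1
  have hz : f z.1 ≠ 0 := hf0 z.1
  have hPsiInv : DifferentiableAt ℝ (PsiInv f) z :=
    (hasFDerivAt_Psi (g := fun q => (f q)⁻¹) (hfz.inv hz)).differentiableAt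
  have hchain : fderiv ℝ (fun w => H (PsiInv f w)) z v =
      fderiv ℝ H (PsiInv f z) (fderiv ℝ (PsiInv f) z v) := by
    rw [fderiv_fun_comp z (hH.differentiable (by norm_num) _) hPsiInv]
    rfl
  have hbase : (fderiv ℝ (PsiInv f) z v).1 = v.1 := by rw [fderiv_PsiInv_apply hfz hz]
  rw [hchain, ← heq, Ξ.semibasic _ _ _ _ _ rfl hbase, mul_sub, ← add_sub_assoc, ChapRescale,
    Omega_fderiv_Psi_add_dfTheta hfz hz, Ξ.form_fderiv_Psi hfz hz, Omega_smul_left,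
    Ξ.smul_left, mul_inv_cancel_left₀ hz, mul_inv_cancel_left₀ hz, inv_mul_cancel_left₀ hz]

theorem statement2 (n : ℕ) (hn : 1 ≤ n) (X : Phase n → Phase n) (H : Phase n → ℝ)
    (Ξ : FiberLinearSemibasicTwoForm n) (f : Vec n → ℝ)
    (hX : ContDiff ℝ (⊤ : ℕ∞) X) (hH : ContDiff ℝ (⊤ : ℕ∞) H)
    (hf : ContDiff ℝ (⊤ : ℕ∞) f) (hf0 : ∀ q, f q ≠ 0)
    (heq : ∀ (z v : Phase n), Omega (X z) v - Ξ.form z (X z) v = fderiv ℝ H z v) :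
    ∀ (z v : Phase n),
      Omega (ChapRescale f X z) v
        + (f z.1)⁻¹ * (dfTheta f z (ChapRescale f X z) v
            - f z.1 * Ξ.form z (ChapRescale f X z) v)
      = fderiv ℝ (fun w => H (PsiInv f w)) z v :=
  statement2_general n X H Ξ f hH hf hf0 heq
end
end

section
/- (Proposition 3.9, necessary and sufficient condition for Hamiltonization, Euclidean case Q̄ = ℝ^n.) Suppose the smooth vector field X on ℝ^n × ℝ^n satisfies the reduced Chaplygin equations i_X(Ω − Ξ) = dH, where Ξ is a fiber-linear semibasic two-form, and let f: ℝ^n → ℝ be smooth and nowhere-vanishing. Then the Chaplygin-rescaled vector field X_C satisfies Hamilton's equations Ω(X_C(z), v) = DH_C(z)[v] for all z and v if and only if the one-form i_{X_C}(df ∧ Θ − f Ξ) vanishes identically, i.e. (df ∧ Θ)_z(X_C(z), v) − f(q)·Ξ_z(X_C(z), v) = 0 for all z = (q,p) and all v. -/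
noncomputable section

open Matrix

/-!
Computing `X_C` explicitly, and evaluating the reduced Chaplygin equations at `Ψ_{1/f}(z)` on
`DΨ_{1/f}(z) v`, one finds the pointwise identity
`Ω(X_C, v) − dH_C(v) = −(1/f) · (df ∧ Θ − f Ξ)(X_C, v)`:
the symplectic form is not preserved by the fiber scaling, and its defect is exactly the
`df ∧ Θ` term. As `f` never vanishes, one side vanishes identically iff the other does.
-/

variable {n : ℕ}

section FiberScaling

variable {g : Vec n → ℝ} {z : Phase n}

theorem hasFDerivAt_psi (hg : DifferentiableAt ℝ g z.1) :
    HasFDerivAt (Psi g)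
      ((ContinuousLinearMap.fst ℝ (Vec n) (Vec n)).prod
        (g z.1 • ContinuousLinearMap.snd ℝ (Vec n) (Vec n) +
          ((fderiv ℝ g z.1).comp (ContinuousLinearMap.fst ℝ (Vec n) (Vec n))).smulRight z.2)) z :=
  hasFDerivAt_fst.prodMk ((hg.hasFDerivAt.comp z hasFDerivAt_fst).smul hasFDerivAt_snd)

theorem fderiv_psi_apply_s3 (hg : DifferentiableAt ℝ g z.1) (w : Phase n) :
    fderiv ℝ (Psi g) z w = (w.1, g z.1 • w.2 + fderiv ℝ g z.1 w.1 • z.2) := by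
  rw [(hasFDerivAt_psi hg).fderiv]
  rfl

end FiberScaling

variable {f : Vec n → ℝ} {z : Phase n}

theorem chapRescale_eq (X : Phase n → Phase n) (hf : DifferentiableAt ℝ f z.1)
    (hf0 : f z.1 ≠ 0) :
    ChapRescale f X z =
      ((f z.1)⁻¹ • (X (PsiInv f z)).1,
        (X (PsiInv f z)).2 + ((f z.1)⁻¹ ^ 2 * fderiv ℝ f z.1 (X (PsiInv f z)).1) • z.2) := by
  rw [ChapRescale, fderiv_psi_apply_s3 (z := PsiInv f z) hf]
  refine Prod.ext rfl ?_
  change f z.1 • (f z.1)⁻¹ • _ + fderiv ℝ f z.1 ((f z.1)⁻¹ • _) • (f z.1)⁻¹ • z.2 = _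
  rw [smul_smul, mul_inv_cancel₀ hf0, one_smul, map_smul, smul_smul, smul_eq_mul]
  module

theorem fderiv_comp_psiInv_apply {H : Phase n → ℝ} (hf : DifferentiableAt ℝ f z.1)
    (hf0 : f z.1 ≠ 0) (hH : DifferentiableAt ℝ H (PsiInv f z)) (v : Phase n) :
    fderiv ℝ (fun w => H (PsiInv f w)) z v =
      fderiv ℝ H (PsiInv f z)
        (v.1, (f z.1)⁻¹ • v.2 - ((f z.1)⁻¹ ^ 2 * fderiv ℝ f z.1 v.1) • z.2) := by
  have hinv : HasFDerivAt (fun q => (f q)⁻¹)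
      ((-ContinuousLinearMap.mulLeftRight ℝ ℝ (f z.1)⁻¹ (f z.1)⁻¹).comp (fderiv ℝ f z.1)) z.1 :=
    (hasFDerivAt_inv' hf0).comp z.1 hf.hasFDerivAt
  have hpsi : DifferentiableAt ℝ (PsiInv f) z :=
    (hasFDerivAt_psi hinv.differentiableAt).differentiableAt
  rw [fderiv_fun_comp z hH hpsi, ContinuousLinearMap.comp_apply, PsiInv,
    fderiv_psi_apply_s3 hinv.differentiableAt, hinv.fderiv]
  congr 2
  simp only [ContinuousLinearMap.neg_comp, _root_.neg_apply, ContinuousLinearMap.comp_apply,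
    ContinuousLinearMap.mulLeftRight_apply]
  module

theorem omega_chapRescale_sub_fderiv {X : Phase n → Phase n} {H : Phase n → ℝ}
    {Ξ : FiberLinearSemibasicTwoForm n}
    (heq : ∀ z v : Phase n, Omega (X z) v - Ξ.form z (X z) v = fderiv ℝ H z v)
    (hf : DifferentiableAt ℝ f z.1) (hf0 : f z.1 ≠ 0) (hH : DifferentiableAt ℝ H (PsiInv f z))
    (v : Phase n) :
    Omega (ChapRescale f X z) v - fderiv ℝ (fun w => H (PsiInv f w)) z v =
      -(f z.1)⁻¹ *
        (dfTheta f z (ChapRescale f X z) v - f z.1 * Ξ.form z (ChapRescale f X z) v) := by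
  have hXi (w : Vec n) :
      Ξ.form (PsiInv f z) (X (PsiInv f z)) (v.1, w) = (f z.1)⁻¹ * Ξ.form z (X (PsiInv f z)) v :=
    (Ξ.semibasic (PsiInv f z) (X (PsiInv f z)) (v.1, w) (X (PsiInv f z)) v rfl rfl).trans
      (Ξ.fiber_smul z.1 (f z.1)⁻¹ z.2 _ v)
  have hXiC : Ξ.form z (ChapRescale f X z) v = (f z.1)⁻¹ * Ξ.form z (X (PsiInv f z)) v :=
    calc Ξ.form z (ChapRescale f X z) v = Ξ.form z ((f z.1)⁻¹ • X (PsiInv f z)) v :=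
          Ξ.semibasic _ _ _ _ _ (by rw [chapRescale_eq X hf hf0]; rfl) rfl
      _ = _ := Ξ.smul_left _ _ _ _
  rw [fderiv_comp_psiInv_apply hf hf0 hH, ← heq, hXi, hXiC, chapRescale_eq X hf hf0]
  simp only [Omega, dfTheta, map_smul, smul_eq_mul, dotProduct_sub,
    add_dotProduct, smul_dotProduct, dotProduct_smul, dotProduct_comm z.2]
  field_simp
  ring

theorem statement3_general (n : ℕ) (X : Phase n → Phase n) (H : Phase n → ℝ)
    (Ξ : FiberLinearSemibasicTwoForm n) (f : Vec n → ℝ)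
    (hH : ContDiff ℝ (⊤ : ℕ∞) H)
    (hf : ContDiff ℝ (⊤ : ℕ∞) f) (hf0 : ∀ q, f q ≠ 0)
    (heq : ∀ (z v : Phase n), Omega (X z) v - Ξ.form z (X z) v = fderiv ℝ H z v) :
    (∀ (z v : Phase n),
        Omega (ChapRescale f X z) v = fderiv ℝ (fun w => H (PsiInv f w)) z v)
      ↔ (∀ (z v : Phase n),
          dfTheta f z (ChapRescale f X z) v - f z.1 * Ξ.form z (ChapRescale f X z) v = 0) := by
  have key (z v : Phase n) := omega_chapRescale_sub_fderiv heq
    (hf.differentiable (by simp) z.1) (hf0 z.1) (hH.differentiable (by simp) _) v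
  refine forall₂_congr fun z v => ?_
  rw [← sub_eq_zero, key, mul_eq_zero,
    or_iff_right (neg_ne_zero.mpr (inv_ne_zero (hf0 z.1)))]

theorem statement3 (n : ℕ) (hn : 1 ≤ n) (X : Phase n → Phase n) (H : Phase n → ℝ)
    (Ξ : FiberLinearSemibasicTwoForm n) (f : Vec n → ℝ)
    (hX : ContDiff ℝ (⊤ : ℕ∞) X) (hH : ContDiff ℝ (⊤ : ℕ∞) H)
    (hf : ContDiff ℝ (⊤ : ℕ∞) f) (hf0 : ∀ q, f q ≠ 0)
    (heq : ∀ (z v : Phase n), Omega (X z) v - Ξ.form z (X z) v = fderiv ℝ H z v) :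
    (∀ (z v : Phase n),
        Omega (ChapRescale f X z) v = fderiv ℝ (fun w => H (PsiInv f w)) z v)
      ↔ (∀ (z v : Phase n),
          dfTheta f z (ChapRescale f X z) v - f z.1 * Ξ.form z (ChapRescale f X z) v = 0) :=
  statement3_general n X H Ξ f hH hf hf0 heq
end
end

section
/- (Theorem 4.1, main theorem, for a Chaplygin system on a trivial principal bundle Q = ℝ^{n̄} × ℝ^m.) Suppose f: ℝ^{n̄} → ℝ is smooth, nowhere-vanishing, and satisfies df ∧ Θ̄ = f·Ξ pointwise on the reduced phase space ℝ^{n̄} × ℝ^{n̄}. Let E ∈ ℝ and let W̄: ℝ^{n̄} → ℝ be a smooth solution of the Chaplygin Hamilton–Jacobi equation H̄(r, ∇W̄(r)/f(r)) = E for all r ∈ ℝ^{n̄}. Define the one-form γ: Q → ℝ^{n̄+m} by γ(r,s) := hl^M(r)·(∇W̄(r)/f(r)). Then: (i) H((r,s), γ(r,s)) = E for every (r,s) ∈ Q (the nonholonomic Hamilton–Jacobi equation holds); and (ii) dγ vanishes on the constraint distribution: for every q = (r,s) and all v, w ∈ ℝ^{n̄}, setting v^h = (v, −A(r)v) and w^h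 = (w, −A(r)w), one has ⟨Dγ(q)[v^h], w^h⟩ − ⟨Dγ(q)[w^h], v^h⟩ = 0. -/
noncomputable section

open Matrix

/-- Horizontal lift of the connection `A` at base point `r`, as the
`(n̄+m) × n̄` matrix `v ↦ (v, −A v)`. -/
def hlD {nb m : ℕ} (A : Matrix (Fin m) (Fin nb) ℝ) : Matrix (Fin nb ⊕ Fin m) (Fin nb) ℝ :=
  Matrix.of (Sum.elim (1 : Matrix (Fin nb) (Fin nb) ℝ) (-A))

/-- Reduced kinetic metric `ḡ = (hl^D)ᵀ g hl^D`. -/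
def gbar {nb m : ℕ} (A : Matrix (Fin m) (Fin nb) ℝ)
    (g : Matrix (Fin nb ⊕ Fin m) (Fin nb ⊕ Fin m) ℝ) : Matrix (Fin nb) (Fin nb) ℝ :=
  (hlD A)ᵀ * g * hlD A

/-- Momentum horizontal lift `hl^M = g · hl^D · ḡ⁻¹`. -/
def hlM {nb m : ℕ} (A : Matrix (Fin m) (Fin nb) ℝ)
    (g : Matrix (Fin nb ⊕ Fin m) (Fin nb ⊕ Fin m) ℝ) : Matrix (Fin nb ⊕ Fin m) (Fin nb) ℝ :=
  g * hlD A * (gbar A g)⁻¹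

/-- Gradient of a function on `ℝᵏ` with respect to the standard basis. -/
def grad {k : ℕ} (W : (Fin k → ℝ) → ℝ) (r : Fin k → ℝ) : Fin k → ℝ :=
  fun i => fderiv ℝ W r (Pi.single i 1)

/-- Curvature of the connection `A`:
`B_a(r)(u,v) = ∑_{i,j} ∂A_{aj}/∂r_i · (u_i v_j − v_i u_j)`. -/
def curv {nb m : ℕ} (A : (Fin nb → ℝ) → Matrix (Fin m) (Fin nb) ℝ)
    (r u v : Fin nb → ℝ) : Fin m → ℝ :=
  fun a => ∑ i, ∑ j,
    fderiv ℝ (fun r' => A r' a j) r (Pi.single i 1) * (u i * v j - v i * u j)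

/-- Momentum map pairing: the last `m` components of `hl^M(r)·p̄`. -/
def momJ {nb m : ℕ} (A : (Fin nb → ℝ) → Matrix (Fin m) (Fin nb) ℝ)
    (g : (Fin nb → ℝ) → Matrix (Fin nb ⊕ Fin m) (Fin nb ⊕ Fin m) ℝ)
    (r pbar : Fin nb → ℝ) : Fin m → ℝ :=
  fun a => (hlM (A r) (g r)).mulVec pbar (Sum.inr a)

/-- The one-form `γ(r,s) = hl^M(r)·(∇W̄(r)/f(r))` on `Q = ℝ^{n̄} × ℝ^m`. -/
def gammaForm {nb m : ℕ} (A : (Fin nb → ℝ) → Matrix (Fin m) (Fin nb) ℝ)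
    (g : (Fin nb → ℝ) → Matrix (Fin nb ⊕ Fin m) (Fin nb ⊕ Fin m) ℝ)
    (f W : (Fin nb → ℝ) → ℝ) (q : (Fin nb → ℝ) × (Fin m → ℝ)) : Fin nb ⊕ Fin m → ℝ :=
  (hlM (A q.1) (g q.1)).mulVec ((f q.1)⁻¹ • grad W q.1)

/-!
Since `(hl^M)ᵀ hl^D = 1`, the one-form `γ` pairs with horizontal lifts exactly as the reduced
momentum `p = ∇W̄ / f` pairs with base vectors: `⟨γ, hl^D u⟩ = ⟨p, u⟩`, and likewise
`⟨γ, g⁻¹ γ⟩ = ⟨p, ḡ⁻¹ p⟩`, which is (i). Differentiating the first identity along `v` and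
antisymmetrising gives `dγ(v^h, w^h) = dp(v, w) + ⟨J, B(v, w)⟩`, the curvature term coming from the
variation of `hl^D` with the base point. As the Hessian of `W̄` is symmetric, `dp(v, w)` only sees
the derivative of `1/f`, and equals `-(df ∧ Θ̄)(v, w) / f` at `p`; the Hamiltonization condition
turns this into `-⟨J, B(v, w)⟩`.
-/

section MatrixCalculus

variable {E : Type*} [NormedAddCommGroup E] [NormedSpace ℝ E]

lemma mulVec_dotProduct_mulVec {α β γ : Type*} [Fintype α] [Fintype β] [Fintype γ]
    (P : Matrix α β ℝ) (Q : Matrix α γ ℝ) (x : β → ℝ) (y : γ → ℝ) :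
    P *ᵥ x ⬝ᵥ Q *ᵥ y = x ⬝ᵥ (Pᵀ * Q) *ᵥ y := by
  rw [← mulVec_mulVec, dotProduct_mulVec x, vecMul_transpose, dotProduct_mulVec (P *ᵥ x)]

lemma fderiv_dotProduct {ι : Type*} [Fintype ι] {F G : E → ι → ℝ} {x : E}
    (hF : DifferentiableAt ℝ F x) (hG : DifferentiableAt ℝ G x) (v : E) :
    fderiv ℝ (fun y => F y ⬝ᵥ G y) x v = fderiv ℝ F x v ⬝ᵥ G x + F x ⬝ᵥ fderiv ℝ G x v := by
  have hFG := HasFDerivAt.fun_sum (u := Finset.univ) fun i _ =>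
    (hasFDerivAt_pi'.1 hF.hasFDerivAt i).fun_mul (hasFDerivAt_pi'.1 hG.hasFDerivAt i)
  rw [show (fun y => F y ⬝ᵥ G y) = fun y => ∑ i, F y i * G y i from rfl, hFG.fderiv]
  simp [dotProduct, Finset.sum_add_distrib, mul_comm, add_comm]

lemma fderiv_mulVec_apply {α β : Type*} [Fintype β] {A : E → Matrix α β ℝ} {x : E}
    (hA : ∀ a j, DifferentiableAt ℝ (fun y => A y a j) x) (u : β → ℝ) (v : E) (a : α) :
    fderiv ℝ (fun y => A y *ᵥ u) x v a = ∑ j, fderiv ℝ (fun y => A y a j) x v * u j := by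
  have hAu : HasFDerivAt (fun y => A y *ᵥ u)
      (ContinuousLinearMap.pi fun a => ∑ j, u j • fderiv ℝ (fun y => A y a j) x) x :=
    hasFDerivAt_pi.2 fun a => HasFDerivAt.fun_sum fun j _ => (hA a j).hasFDerivAt.mul_const (u j)
  simp [hAu.fderiv, mul_comm]

lemma apply_eq_sum_mul_single {ι : Type*} [Fintype ι] [DecidableEq ι] (L : (ι → ℝ) →L[ℝ] ℝ)
    (v : ι → ℝ) : L v = ∑ i, v i * L (Pi.single i 1) := by
  conv_lhs => rw [pi_eq_sum_univ' v]
  simp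

variable {n : WithTop ℕ∞}

lemma contDiff_mul_apply {α β γ : Type*} [Fintype β] {M : E → Matrix α β ℝ}
    {N : E → Matrix β γ ℝ} (hM : ∀ i j, ContDiff ℝ n fun x => M x i j)
    (hN : ∀ i j, ContDiff ℝ n fun x => N x i j) (i : α) (j : γ) :
    ContDiff ℝ n fun x => (M x * N x) i j :=
  ContDiff.sum fun k _ => (hM i k).mul (hN k j)

lemma contDiff_det {ι : Type*} [Fintype ι] [DecidableEq ι] {M : E → Matrix ι ι ℝ}
    (hM : ∀ i j, ContDiff ℝ n fun x => M x i j) : ContDiff ℝ n fun x => (M x).det := by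
  simp only [det_apply']
  exact ContDiff.sum fun σ _ => contDiff_const.mul (contDiff_prod fun i _ => hM (σ i) i)

lemma contDiff_inv_apply {ι : Type*} [Fintype ι] [DecidableEq ι] {M : E → Matrix ι ι ℝ}
    (hM : ∀ i j, ContDiff ℝ n fun x => M x i j) (hdet : ∀ x, (M x).det ≠ 0) (i j : ι) :
    ContDiff ℝ n fun x => (M x)⁻¹ i j := by
  have hadj : ContDiff ℝ n fun x => (M x).adjugate i j := by
    simp only [adjugate_apply]
    refine contDiff_det fun k l => ?_
    by_cases hkj : k = j
    · simpa [hkj] using contDiff_const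
    · simpa [hkj] using hM k l
  simp only [inv_def, Ring.inverse_eq_inv', Matrix.smul_apply, smul_eq_mul]
  exact ((contDiff_det hM).inv hdet).mul hadj

lemma differentiableAt_mulVec {α β : Type*} [Fintype β] {M : E → Matrix α β ℝ} {x : E → β → ℝ}
    {y : E} (hM : ∀ i j, DifferentiableAt ℝ (fun y => M y i j) y) (hx : DifferentiableAt ℝ x y) :
    DifferentiableAt ℝ (fun y => M y *ᵥ x y) y :=
  differentiableAt_pi.2 fun i =>
    DifferentiableAt.fun_sum fun j _ => (hM i j).mul (differentiableAt_pi.1 hx j)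

end MatrixCalculus

section Lifts

variable {nb m : ℕ}

lemma hlD_mulVec (A : Matrix (Fin m) (Fin nb) ℝ) (u : Fin nb → ℝ) :
    hlD A *ᵥ u = Sum.elim u (-(A *ᵥ u)) := by
  ext (i | a)
  · exact congrFun (one_mulVec u) i
  · exact congrFun (neg_mulVec u A) a

variable {A : Matrix (Fin m) (Fin nb) ℝ} {g : Matrix (Fin nb ⊕ Fin m) (Fin nb ⊕ Fin m) ℝ}

lemma gbar_posDef (hg : g.PosDef) : (gbar A g).PosDef := by
  refine hg.conjTranspose_mul_mul_same (B := hlD A) fun x y hxy => funext fun i => ?_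
  rw [hlD_mulVec, hlD_mulVec] at hxy
  exact congrFun hxy (Sum.inl i)

lemma transpose_hlM_mul_hlD (hg : g.PosDef) : (hlM A g)ᵀ * hlD A = 1 := by
  have hgbar := gbar_posDef (A := A) hg
  rw [hlM, transpose_mul, transpose_mul, (isHermitian_iff_isSymm.1 hg.isHermitian).eq,
    transpose_nonsing_inv, (isHermitian_iff_isSymm.1 hgbar.isHermitian).eq, Matrix.mul_assoc,
    ← gbar]
  exact nonsing_inv_mul _ hgbar.det_pos.ne'.isUnit

lemma hlM_mulVec_dotProduct_hlD_mulVec (hg : g.PosDef) (p u : Fin nb → ℝ) :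
    hlM A g *ᵥ p ⬝ᵥ hlD A *ᵥ u = p ⬝ᵥ u := by
  rw [mulVec_dotProduct_mulVec, transpose_hlM_mul_hlD hg, one_mulVec]

lemma hlM_mulVec_dotProduct_inv_mulVec (hg : g.PosDef) (p : Fin nb → ℝ) :
    hlM A g *ᵥ p ⬝ᵥ g⁻¹ *ᵥ hlM A g *ᵥ p = p ⬝ᵥ (gbar A g)⁻¹ *ᵥ p := by
  have hunit : IsUnit g.det := hg.det_pos.ne'.isUnit
  rw [mulVec_mulVec, hlM, ← Matrix.mul_assoc, ← Matrix.mul_assoc, nonsing_inv_mul g hunit,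
    Matrix.one_mul, mulVec_dotProduct_mulVec, ← Matrix.mul_assoc, ← hlM,
    transpose_hlM_mul_hlD hg, Matrix.one_mul]

end Lifts

section LiftSmoothness

variable {nb m : ℕ} {E : Type*} [NormedAddCommGroup E] [NormedSpace ℝ E] {n : WithTop ℕ∞}
  {A : E → Matrix (Fin m) (Fin nb) ℝ} {g : E → Matrix (Fin nb ⊕ Fin m) (Fin nb ⊕ Fin m) ℝ}

lemma contDiff_hlD_apply (hA : ∀ a i, ContDiff ℝ n fun x => A x a i) (k : Fin nb ⊕ Fin m)
    (i : Fin nb) : ContDiff ℝ n fun x => hlD (A x) k i := by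
  cases k with
  | inl j => exact contDiff_const
  | inr a => exact (hA a i).neg

lemma contDiff_hlM_apply (hA : ∀ a i, ContDiff ℝ n fun x => A x a i)
    (hg : ∀ i j, ContDiff ℝ n fun x => g x i j) (hgpos : ∀ x, (g x).PosDef)
    (k : Fin nb ⊕ Fin m) (j : Fin nb) : ContDiff ℝ n fun x => hlM (A x) (g x) k j := by
  have hgbar : ∀ i j, ContDiff ℝ n fun x => gbar (A x) (g x) i j :=
    contDiff_mul_apply (contDiff_mul_apply (fun i k => contDiff_hlD_apply hA k i) hg)
      (contDiff_hlD_apply hA)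
  exact contDiff_mul_apply (contDiff_mul_apply hg (contDiff_hlD_apply hA))
    (contDiff_inv_apply hgbar fun x => (gbar_posDef (hgpos x)).det_pos.ne') k j

end LiftSmoothness

section Gradient

variable {k : ℕ} {f W φ : (Fin k → ℝ) → ℝ} {r : Fin k → ℝ}

lemma grad_dotProduct (W : (Fin k → ℝ) → ℝ) (r u : Fin k → ℝ) :
    grad W r ⬝ᵥ u = fderiv ℝ W r u := by
  rw [apply_eq_sum_mul_single (fderiv ℝ W r) u, dotProduct]
  exact Finset.sum_congr rfl fun i _ => mul_comm _ _

lemma differentiableAt_grad (hW : ContDiffAt ℝ 2 W r) : DifferentiableAt ℝ (grad W) r :=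
  differentiableAt_pi.2 fun _ =>
    ((hW.fderiv_right (m := 1) le_rfl).differentiableAt one_ne_zero).clm_apply
      (differentiableAt_const _)

lemma fderiv_grad_dotProduct_comm (hW : ContDiffAt ℝ 2 W r) (v w : Fin k → ℝ) :
    fderiv ℝ (grad W) r v ⬝ᵥ w = fderiv ℝ (grad W) r w ⬝ᵥ v := by
  have hd2 : DifferentiableAt ℝ (fderiv ℝ W) r :=
    (hW.fderiv_right (m := 1) le_rfl).differentiableAt one_ne_zero
  have hpair (v w : Fin k → ℝ) :
      fderiv ℝ (grad W) r v ⬝ᵥ w = fderiv ℝ (fderiv ℝ W) r v w := by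
    have h := fderiv_dotProduct (differentiableAt_grad hW) (differentiableAt_const w) v
    rw [fderiv_const_apply, _root_.zero_apply, dotProduct_zero, add_zero] at h
    simp only [grad_dotProduct] at h
    rw [← h, fderiv_clm_apply hd2 (differentiableAt_const w)]
    simp
  rw [hpair, hpair, hW.isSymmSndFDerivAt (by simp)]

lemma fderiv_smul_grad_dotProduct_sub (hφ : DifferentiableAt ℝ φ r) (hW : ContDiffAt ℝ 2 W r)
    (v w : Fin k → ℝ) :
    fderiv ℝ (fun r => φ r • grad W r) r v ⬝ᵥ w - fderiv ℝ (fun r => φ r • grad W r) r w ⬝ᵥ v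
      = fderiv ℝ φ r v * (grad W r ⬝ᵥ w) - fderiv ℝ φ r w * (grad W r ⬝ᵥ v) := by
  rw [fderiv_fun_smul hφ (differentiableAt_grad hW)]
  simp only [_root_.add_apply, _root_.smul_apply, ContinuousLinearMap.smulRight_apply,
    add_dotProduct, smul_dotProduct, smul_eq_mul, fderiv_grad_dotProduct_comm hW v w]
  ring

lemma fderiv_inv_smul_grad_dotProduct_sub (hf : DifferentiableAt ℝ f r) (hf0 : f r ≠ 0)
    (hW : ContDiffAt ℝ 2 W r) (v w : Fin k → ℝ) :
    fderiv ℝ (fun r => (f r)⁻¹ • grad W r) r v ⬝ᵥ w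
        - fderiv ℝ (fun r => (f r)⁻¹ • grad W r) r w ⬝ᵥ v
      = -(f r)⁻¹ * (fderiv ℝ f r v * (((f r)⁻¹ • grad W r) ⬝ᵥ w)
        - fderiv ℝ f r w * (((f r)⁻¹ • grad W r) ⬝ᵥ v)) := by
  have hinv : HasFDerivAt (fun r => (f r)⁻¹) (-(f r ^ 2)⁻¹ • fderiv ℝ f r) r :=
    (hasDerivAt_inv hf0).comp_hasFDerivAt r hf.hasFDerivAt
  rw [fderiv_smul_grad_dotProduct_sub hinv.differentiableAt hW, hinv.fderiv]
  simp only [_root_.smul_apply, smul_eq_mul, smul_dotProduct]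
  field_simp
  ring

end Gradient

section Connection

variable {nb m : ℕ}

lemma fderiv_mulVec_sub_fderiv_mulVec_eq_curv {A : (Fin nb → ℝ) → Matrix (Fin m) (Fin nb) ℝ}
    {r : Fin nb → ℝ} (hA : ∀ a j, DifferentiableAt ℝ (fun r => A r a j) r) (v w : Fin nb → ℝ) :
    fderiv ℝ (fun r => A r *ᵥ w) r v - fderiv ℝ (fun r => A r *ᵥ v) r w = curv A r v w := by
  ext a
  rw [Pi.sub_apply, fderiv_mulVec_apply hA, fderiv_mulVec_apply hA, curv]
  simp only [fun j => apply_eq_sum_mul_single (fderiv ℝ (fun r => A r a j) r) v,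
    fun j => apply_eq_sum_mul_single (fderiv ℝ (fun r => A r a j) r) w, Finset.sum_mul,
    ← Finset.sum_sub_distrib]
  rw [Finset.sum_comm]
  exact Finset.sum_congr rfl fun j _ => Finset.sum_congr rfl fun i _ => by ring

variable {E : Type*} [NormedAddCommGroup E] [NormedSpace ℝ E]
  {A : E → Matrix (Fin m) (Fin nb) ℝ} {r : E} {u : Fin nb → ℝ}

lemma hasFDerivAt_hlD_mulVec (hAu : DifferentiableAt ℝ (fun r => A r *ᵥ u) r) :
    HasFDerivAt (fun r => hlD (A r) *ᵥ u) (ContinuousLinearMap.pi (Sum.elim (fun _ => 0)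
      fun a => -(ContinuousLinearMap.proj a).comp (fderiv ℝ (fun r => A r *ᵥ u) r))) r := by
  simp only [hlD_mulVec]
  refine hasFDerivAt_pi.2 fun k => ?_
  cases k with
  | inl i => exact hasFDerivAt_const _ _
  | inr a => exact (hasFDerivAt_pi'.1 hAu.hasFDerivAt a).neg

lemma fderiv_dotProduct_hlD_mulVec {F : E → Fin nb ⊕ Fin m → ℝ} {p : E → Fin nb → ℝ}
    (hF : DifferentiableAt ℝ F r) (hp : DifferentiableAt ℝ p r)
    (hAu : DifferentiableAt ℝ (fun r => A r *ᵥ u) r)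
    (hlift : ∀ r, F r ⬝ᵥ hlD (A r) *ᵥ u = p r ⬝ᵥ u) (v : E) :
    fderiv ℝ F r v ⬝ᵥ hlD (A r) *ᵥ u
      = fderiv ℝ p r v ⬝ᵥ u + (fun a => F r (Sum.inr a)) ⬝ᵥ fderiv ℝ (fun r => A r *ᵥ u) r v := by
  have hH := hasFDerivAt_hlD_mulVec hAu
  have h := fderiv_dotProduct hF hH.differentiableAt v
  rw [funext hlift, fderiv_dotProduct hp (differentiableAt_const u), fderiv_const_apply,
    _root_.zero_apply, dotProduct_zero, add_zero] at h
  have hvert : F r ⬝ᵥ fderiv ℝ (fun r => hlD (A r) *ᵥ u) r v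
      = -((fun a => F r (Sum.inr a)) ⬝ᵥ fderiv ℝ (fun r => A r *ᵥ u) r v) := by
    simp [hH.fderiv, dotProduct, Fintype.sum_sum_type]
  linarith

end Connection

theorem statement6_general (nb m : ℕ)
    (A : (Fin nb → ℝ) → Matrix (Fin m) (Fin nb) ℝ)
    (g : (Fin nb → ℝ) → Matrix (Fin nb ⊕ Fin m) (Fin nb ⊕ Fin m) ℝ)
    (V f W : (Fin nb → ℝ) → ℝ) (E : ℝ)
    (hA : ∀ a i, ContDiff ℝ (⊤ : ℕ∞) fun r => A r a i)
    (hg : ∀ i j, ContDiff ℝ (⊤ : ℕ∞) fun r => g r i j)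
    (hgpos : ∀ r, (g r).PosDef)
    (hf : ContDiff ℝ (⊤ : ℕ∞) f) (hf0 : ∀ r, f r ≠ 0)
    (hW : ContDiff ℝ (⊤ : ℕ∞) W)
    -- sufficient condition for Hamiltonization: `df ∧ Θ̄ = f·Ξ` on `T*(ℝ^{n̄})`
    (hsuff : ∀ r pbar u v : Fin nb → ℝ,
      fderiv ℝ f r u * (pbar ⬝ᵥ v) - fderiv ℝ f r v * (pbar ⬝ᵥ u)
        = f r * (momJ A g r pbar ⬝ᵥ curv A r u v))
    -- Chaplygin Hamilton–Jacobi equation `H̄(r, ∇W̄(r)/f(r)) = E`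
    (hHJ : ∀ r : Fin nb → ℝ,
      (1 / 2) * (((f r)⁻¹ • grad W r) ⬝ᵥ (gbar (A r) (g r))⁻¹.mulVec ((f r)⁻¹ • grad W r))
        + V r = E) :
    -- (i) the nonholonomic Hamilton–Jacobi equation `H(q, γ(q)) = E`
    (∀ q : (Fin nb → ℝ) × (Fin m → ℝ),
        (1 / 2) * (gammaForm A g f W q ⬝ᵥ (g q.1)⁻¹.mulVec (gammaForm A g f W q))
          + V q.1 = E)
      -- (ii) `dγ` vanishes on the constraint distribution
      ∧ (∀ (q : (Fin nb → ℝ) × (Fin m → ℝ)) (v w : Fin nb → ℝ),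
          fderiv ℝ (gammaForm A g f W) q (v, -(A q.1).mulVec v)
              ⬝ᵥ Sum.elim w (-(A q.1).mulVec w)
            - fderiv ℝ (gammaForm A g f W) q (w, -(A q.1).mulVec w)
              ⬝ᵥ Sum.elim v (-(A q.1).mulVec v) = 0) := by
  refine ⟨fun q => ?_, fun ⟨r, s⟩ v w => ?_⟩
  · rw [gammaForm, hlM_mulVec_dotProduct_inv_mulVec (hgpos q.1)]
    exact hHJ q.1
  set p : (Fin nb → ℝ) → Fin nb → ℝ := fun r => (f r)⁻¹ • grad W r
  set F : (Fin nb → ℝ) → Fin nb ⊕ Fin m → ℝ := fun r => hlM (A r) (g r) *ᵥ p r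
  have hW2 : ContDiffAt ℝ 2 W r := hW.contDiffAt.of_le (WithTop.coe_le_coe.2 le_top)
  have hAd (a j) : DifferentiableAt ℝ (fun r => A r a j) r := (hA a j).differentiable (by simp) r
  have hAu (u : Fin nb → ℝ) : DifferentiableAt ℝ (fun r => A r *ᵥ u) r :=
    differentiableAt_mulVec hAd (differentiableAt_const u)
  have hpd : DifferentiableAt ℝ p r :=
    ((hf.differentiable (by simp) r).inv (hf0 r)).smul (differentiableAt_grad hW2)
  have hFd : DifferentiableAt ℝ F r := differentiableAt_mulVec
    (fun k j => (contDiff_hlM_apply hA hg hgpos k j).differentiable (by simp) r) hpd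
  have hγ (x y) : fderiv ℝ (gammaForm A g f W) (r, s) (x, y) = fderiv ℝ F r x := by
    rw [show gammaForm A g f W = F ∘ Prod.fst from rfl,
      fderiv_comp _ hFd differentiableAt_fst, fderiv_fst]
    rfl
  have hlift (u r) : F r ⬝ᵥ hlD (A r) *ᵥ u = p r ⬝ᵥ u :=
    hlM_mulVec_dotProduct_hlD_mulVec (hgpos r) _ _
  have hcurl : fderiv ℝ p r v ⬝ᵥ w - fderiv ℝ p r w ⬝ᵥ v
      = -((fun a => F r (Sum.inr a)) ⬝ᵥ curv A r v w) := by
    have h := fderiv_inv_smul_grad_dotProduct_sub (hf.differentiable (by simp) r) (hf0 r) hW2 v w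
    rwa [hsuff, ← mul_assoc, neg_mul, inv_mul_cancel₀ (hf0 r), neg_one_mul] at h
  rw [← fderiv_mulVec_sub_fderiv_mulVec_eq_curv hAd v w, dotProduct_sub] at hcurl
  dsimp only
  simp only [hγ, ← hlD_mulVec]
  rw [fderiv_dotProduct_hlD_mulVec hFd hpd (hAu w) (hlift w),
    fderiv_dotProduct_hlD_mulVec hFd hpd (hAu v) (hlift v)]
  linarith

theorem statement6 (nb m : ℕ)
    (A : (Fin nb → ℝ) → Matrix (Fin m) (Fin nb) ℝ)
    (g : (Fin nb → ℝ) → Matrix (Fin nb ⊕ Fin m) (Fin nb ⊕ Fin m) ℝ)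
    (V f W : (Fin nb → ℝ) → ℝ) (E : ℝ)
    (hA : ∀ a i, ContDiff ℝ (⊤ : ℕ∞) fun r => A r a i)
    (hg : ∀ i j, ContDiff ℝ (⊤ : ℕ∞) fun r => g r i j)
    (hgpos : ∀ r, (g r).PosDef)
    (hV : ContDiff ℝ (⊤ : ℕ∞) V)
    (hf : ContDiff ℝ (⊤ : ℕ∞) f) (hf0 : ∀ r, f r ≠ 0)
    (hW : ContDiff ℝ (⊤ : ℕ∞) W)
    -- sufficient condition for Hamiltonization: `df ∧ Θ̄ = f·Ξ` on `T*(ℝ^{n̄})`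
    (hsuff : ∀ r pbar u v : Fin nb → ℝ,
      fderiv ℝ f r u * (pbar ⬝ᵥ v) - fderiv ℝ f r v * (pbar ⬝ᵥ u)
        = f r * (momJ A g r pbar ⬝ᵥ curv A r u v))
    -- Chaplygin Hamilton–Jacobi equation `H̄(r, ∇W̄(r)/f(r)) = E`
    (hHJ : ∀ r : Fin nb → ℝ,
      (1 / 2) * (((f r)⁻¹ • grad W r) ⬝ᵥ (gbar (A r) (g r))⁻¹.mulVec ((f r)⁻¹ • grad W r))
        + V r = E) :
    -- (i) the nonholonomic Hamilton–Jacobi equation `H(q, γ(q)) = E`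
    (∀ q : (Fin nb → ℝ) × (Fin m → ℝ),
        (1 / 2) * (gammaForm A g f W q ⬝ᵥ (g q.1)⁻¹.mulVec (gammaForm A g f W q))
          + V q.1 = E)
      -- (ii) `dγ` vanishes on the constraint distribution
      ∧ (∀ (q : (Fin nb → ℝ) × (Fin m → ℝ)) (v w : Fin nb → ℝ),
          fderiv ℝ (gammaForm A g f W) q (v, -(A q.1).mulVec v)
              ⬝ᵥ Sum.elim w (-(A q.1).mulVec w)
            - fderiv ℝ (gammaForm A g f W) q (w, -(A q.1).mulVec w)
              ⬝ᵥ Sum.elim v (-(A q.1).mulVec v) = 0) :=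
  statement6_general nb m A g V f W E hA hg hgpos hf hf0 hW hsuff hHJ
end
end

section
/- (Proposition 6.1, conservation of the momentum map, Euclidean translation case.) Let H: ℝ^n × ℝ^n → ℝ be smooth, let Ξ be a smooth assignment z ↦ Ξ_z of alternating bilinear forms on ℝ^n × ℝ^n, and let X be a smooth vector field satisfying Ω(X(z), v) − Ξ_z(X(z), v) = DH(z)[v] for all z and v. Fix an index k ∈ {1,…,n} and suppose: (I) ∂H/∂q_k ≡ 0 (invariance of H under translation in q_k), and (II) Ξ_z((e_k, 0), ·) ≡ 0 for all z, where e_k is the k-th standard basis vector of ℝ^n. Then the momentum function J(q,p) = p_k is conserved along the flow of X; equivalently, writing X(z) = (X_q(z), X_p(z)), the k-th component of X_p vanishes identically. -/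
noncomputable section

open Matrix

theorem statement7 (n : ℕ) (hn : 1 ≤ n) (H : Phase n → ℝ)
    (Ξ : Phase n → Phase n → Phase n → ℝ) (X : Phase n → Phase n)
    (hH : ContDiff ℝ (⊤ : ℕ∞) H) (hX : ContDiff ℝ (⊤ : ℕ∞) X)
    (hΞsmooth : ∀ u v : Phase n, ContDiff ℝ (⊤ : ℕ∞) fun z => Ξ z u v)
    (hΞalt : ∀ z u v : Phase n, Ξ z u v = - Ξ z v u)
    (hΞaddl : ∀ z u u' v : Phase n, Ξ z (u + u') v = Ξ z u v + Ξ z u' v)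
    (hΞsmull : ∀ (z : Phase n) (c : ℝ) (u v : Phase n), Ξ z (c • u) v = c * Ξ z u v)
    (heq : ∀ (z v : Phase n), Omega (X z) v - Ξ z (X z) v = fderiv ℝ H z v)
    (k : Fin n)
    (hinvH : ∀ z : Phase n, fderiv ℝ H z ((Pi.single k 1 : Vec n), (0 : Vec n)) = 0)
    (hinvΞ : ∀ z v : Phase n, Ξ z ((Pi.single k 1 : Vec n), (0 : Vec n)) v = 0) :
    ∀ z : Phase n, (X z).2 k = 0 := by
  intro z
  have h := heq z ((Pi.single k 1 : Vec n), (0 : Vec n))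
  rw [hinvH z, hΞalt, hinvΞ] at h
  simp [Omega, dotProduct, Pi.single_apply] at h
  linarith
end
end

section
/- (Pointwise linear-algebra content of Lemma 3.4: the n-th wedge power of Ψ_f^*Ω equals f^n times that of Ω.) Let n ≥ 1, c ∈ ℝ, and a, p ∈ ℝ^n. Define the alternating bilinear form ω on ℝ^n × ℝ^n by ω(u,v) = c·(⟨u_q, v_p⟩ − ⟨u_p, v_q⟩) − (⟨a, u_q⟩⟨p, v_q⟩ − ⟨a, v_q⟩⟨p, u_q⟩), writing u = (u_q, u_p). Then the 2n × 2n matrix M with entries M_{ij} = ω(e_i, e_j), where (e_i) is the standard basis of ℝ^n × ℝ^n ≅ ℝ^{2n}, has determinant det M = c^{2n}. -/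
noncomputable section

open Matrix

/-- The alternating bilinear form `ω(u,v) = c·(⟨u_q,v_p⟩ − ⟨u_p,v_q⟩)
− (⟨a,u_q⟩⟨p,v_q⟩ − ⟨a,v_q⟩⟨p,u_q⟩)` on `ℝⁿ × ℝⁿ`. -/
def omegaForm (n : ℕ) (c : ℝ) (a p : Fin n → ℝ)
    (u v : (Fin n → ℝ) × (Fin n → ℝ)) : ℝ :=
  c * (u.1 ⬝ᵥ v.2 - u.2 ⬝ᵥ v.1) - ((a ⬝ᵥ u.1) * (p ⬝ᵥ v.1) - (a ⬝ᵥ v.1) * (p ⬝ᵥ u.1))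

/-- The standard basis of `ℝⁿ × ℝⁿ ≅ ℝ²ⁿ`, indexed by `Fin n ⊕ Fin n`. -/
def stdBasisPhase (n : ℕ) : Fin n ⊕ Fin n → (Fin n → ℝ) × (Fin n → ℝ) :=
  Sum.elim (fun i => ((Pi.single i 1 : Fin n → ℝ), 0))
    (fun i => (0, (Pi.single i 1 : Fin n → ℝ)))

/-! The Gram matrix of `ω` in the basis `(e_q, e_p)` is `[[A, c I], [-c I, 0]]` with `A` the
matrix of the term `⟨a, u_q⟩⟨p, v_q⟩ - ⟨a, v_q⟩⟨p, u_q⟩`. Because the lower-right block vanishes,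
the determinant of such a block matrix does not see `A` and equals
`(-1)ⁿ det(c I) det(-c I) = c²ⁿ`. -/

namespace Matrix

variable {m R : Type*} [Fintype m] [DecidableEq m] [CommRing R]

/-- `[[A, B], [C, 0]] = [[-B, A], [0, C]] * J`, with `det J = 1` since `J` is symplectic. -/
theorem det_fromBlocks_zero₂₂ (A B C : Matrix m m R) :
    (fromBlocks A B C 0).det = (-1) ^ Fintype.card m * B.det * C.det := by
  have hJ : (J m R).det = 1 := SymplecticGroup.det_eq_one (SymplecticGroup.J_mem m R)
  have hfactor : fromBlocks A B C 0 = fromBlocks (-B) A 0 C * J m R := by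
    simp [J, fromBlocks_multiply]
  rw [hfactor, det_mul, det_fromBlocks_zero₂₁, det_neg, hJ]
  ring

end Matrix

theorem gram_omegaForm_stdBasisPhase (n : ℕ) (c : ℝ) (a p : Fin n → ℝ) :
    (Matrix.of fun i j : Fin n ⊕ Fin n =>
        omegaForm n c a p (stdBasisPhase n i) (stdBasisPhase n j))
      = fromBlocks (Matrix.of fun i j => a j * p i - a i * p j) (c • 1) (-(c • 1)) 0 := by
  ext (i | i) (j | j) <;>
    simp [omegaForm, stdBasisPhase, Matrix.one_apply, Pi.single_apply, dotProduct, mul_comm,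
      eq_comm]

theorem statement11_general (n : ℕ) (c : ℝ) (a p : Fin n → ℝ) :
    (Matrix.of fun i j : Fin n ⊕ Fin n =>
        omegaForm n c a p (stdBasisPhase n i) (stdBasisPhase n j)).det
      = c ^ (2 * n) := by
  rw [gram_omegaForm_stdBasisPhase, det_fromBlocks_zero₂₂, det_neg, det_smul, det_one,
    Fintype.card_fin, two_mul, pow_add]
  have hsign : (-1 : ℝ) ^ n * (-1) ^ n = 1 := by rw [← mul_pow]; norm_num
  linear_combination c ^ n * c ^ n * hsign

theorem statement11 (n : ℕ) (hn : 1 ≤ n) (c : ℝ) (a p : Fin n → ℝ) :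
    (Matrix.of fun i j : Fin n ⊕ Fin n =>
        omegaForm n c a p (stdBasisPhase n i) (stdBasisPhase n j)).det
      = c ^ (2 * n) :=
  statement11_general n c a p
end
end

section
/- (Example 5.1, the vertical rolling disk: the one-form produced by the Chaplygin Hamilton–Jacobi method solves the nonholonomic Hamilton–Jacobi equation.) Let m, I, J, R > 0 and let γ_φ⁰, γ_ψ⁰, E ∈ ℝ satisfy (1/2)·[(γ_φ⁰)²/J + (I + mR²)·(γ_ψ⁰)²/I²] = E. Define the one-form γ on ℝ⁴ by γ(φ,x,y,ψ) = γ_φ⁰ dφ + (mR/I)·cos φ·γ_ψ⁰ dx + (mR/I)·sin φ·γ_ψ⁰ dy + γ_ψ⁰ dψ. Then: (i) H(q, γ(q)) = E for all q ∈ ℝ⁴; and (ii) dγ_q(u, v) = 0 for all q ∈ ℝ⁴ and all u, v ∈ D_q. -/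
noncomputable section

open Matrix

/-- Hamiltonian of the vertical rolling disk, coordinates `q = (φ, x, y, ψ)`
(indices 0,1,2,3) and momenta `p = (p_φ, p_x, p_y, p_ψ)`. -/
def diskH (m I J : ℝ) (p : Fin 4 → ℝ) : ℝ :=
  ((p 1) ^ 2 + (p 2) ^ 2) / (2 * m) + (p 0) ^ 2 / (2 * J) + (p 3) ^ 2 / (2 * I)

/-- Constraint distribution of the vertical rolling disk, spanned by
`∂_φ` and `∂_ψ + R cos φ ∂_x + R sin φ ∂_y`. -/
def diskD (R : ℝ) (q : Fin 4 → ℝ) : Submodule ℝ (Fin 4 → ℝ) :=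
  Submodule.span ℝ
    ({![1, 0, 0, 0], ![0, R * Real.cos (q 0), R * Real.sin (q 0), 1]} : Set (Fin 4 → ℝ))

/-- The one-form produced by the Chaplygin Hamilton–Jacobi method:
`γ = γ_φ⁰ dφ + (mR/I) cos φ γ_ψ⁰ dx + (mR/I) sin φ γ_ψ⁰ dy + γ_ψ⁰ dψ`. -/
def diskGamma (m I R γφ0 γψ0 : ℝ) (q : Fin 4 → ℝ) : Fin 4 → ℝ :=
  ![γφ0, m * R / I * Real.cos (q 0) * γψ0, m * R / I * Real.sin (q 0) * γψ0, γψ0]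

/-!
Since `γ` depends on `q` only through the angle `φ`, its derivative is
`Dγ(q)[u] = u_φ · (mR/I) γ_ψ⁰ · (0, -sin φ, cos φ, 0)`, and this covector annihilates the
constraint distribution (on `X₂` it gives `R (-sin φ cos φ + cos φ sin φ) = 0`).
Hence each of the two terms of `dγ_q(u, v)` already vanishes for `u, v ∈ D_q`.
The energy identity is `cos² φ + sin² φ = 1`.
-/

def diskGammaOfAngle (m I R γφ0 γψ0 φ : ℝ) : Fin 4 → ℝ :=
  ![γφ0, m * R / I * Real.cos φ * γψ0, m * R / I * Real.sin φ * γψ0, γψ0]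

lemma diskGamma_eq_comp (m I R γφ0 γψ0 : ℝ) :
    diskGamma m I R γφ0 γψ0 = diskGammaOfAngle m I R γφ0 γψ0 ∘ fun q => q 0 :=
  rfl

def rollingNormal (φ : ℝ) : Fin 4 → ℝ :=
  ![0, -Real.sin φ, Real.cos φ, 0]

lemma rollingNormal_dotProduct_eq_zero {R : ℝ} {q v : Fin 4 → ℝ} (hv : v ∈ diskD R q) :
    rollingNormal (q 0) ⬝ᵥ v = 0 := by
  obtain ⟨a, b, rfl⟩ := Submodule.mem_span_pair.mp hv
  simp [rollingNormal, dotProduct, Fin.sum_univ_four, mul_assoc, mul_left_comm, mul_comm]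

lemma hasDerivAt_diskGammaOfAngle (m I R γφ0 γψ0 φ : ℝ) :
    HasDerivAt (diskGammaOfAngle m I R γφ0 γψ0) ((m * R / I * γψ0) • rollingNormal φ) φ := by
  rw [hasDerivAt_pi]
  intro i
  fin_cases i
  · exact (hasDerivAt_const φ γφ0).congr_deriv (by simp [rollingNormal])
  · exact (((Real.hasDerivAt_cos φ).const_mul (m * R / I)).mul_const γψ0).congr_deriv
      (by simp [rollingNormal, mul_right_comm])
  · exact (((Real.hasDerivAt_sin φ).const_mul (m * R / I)).mul_const γψ0).congr_deriv
      (by simp [rollingNormal, mul_right_comm])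
  · exact (hasDerivAt_const φ γψ0).congr_deriv (by simp [rollingNormal])

lemma fderiv_diskGamma_apply (m I R γφ0 γψ0 : ℝ) (q u : Fin 4 → ℝ) :
    fderiv ℝ (diskGamma m I R γφ0 γψ0) q u = (u 0 * (m * R / I * γψ0)) • rollingNormal (q 0) := by
  have h := (hasDerivAt_diskGammaOfAngle m I R γφ0 γψ0 (q 0)).hasFDerivAt.comp q
    (hasFDerivAt_apply (𝕜 := ℝ) (F' := fun _ : Fin 4 => ℝ) 0 q)
  rw [diskGamma_eq_comp, h.fderiv]
  simp [smul_smul]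

lemma fderiv_diskGamma_dotProduct_eq_zero (m I R γφ0 γψ0 : ℝ) {q v : Fin 4 → ℝ}
    (hv : v ∈ diskD R q) (u : Fin 4 → ℝ) :
    fderiv ℝ (diskGamma m I R γφ0 γψ0) q u ⬝ᵥ v = 0 := by
  rw [fderiv_diskGamma_apply, smul_dotProduct, rollingNormal_dotProduct_eq_zero hv, smul_zero]

lemma diskH_diskGamma {I : ℝ} (hI : I ≠ 0) (m J R γφ0 γψ0 : ℝ) (q : Fin 4 → ℝ) :
    diskH m I J (diskGamma m I R γφ0 γψ0 q)
      = (1 / 2) * (γφ0 ^ 2 / J + (I + m * R ^ 2) * γψ0 ^ 2 / I ^ 2) := by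
  simp only [diskH, diskGamma, Matrix.cons_val_zero, Matrix.cons_val_one, Matrix.cons_val_two,
    Matrix.cons_val_three, Matrix.head_cons, Matrix.tail_cons]
  field_simp
  linear_combination (m * R ^ 2 * γψ0 ^ 2) * Real.sin_sq_add_cos_sq (q 0)

theorem statement16_general (m I J R : ℝ) (hI : 0 < I)
    (γφ0 γψ0 E : ℝ)
    (hE : (1 / 2) * (γφ0 ^ 2 / J + (I + m * R ^ 2) * γψ0 ^ 2 / I ^ 2) = E) :
    -- (i) the nonholonomic Hamilton–Jacobi equation
    (∀ q : Fin 4 → ℝ, diskH m I J (diskGamma m I R γφ0 γψ0 q) = E)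
      -- (ii) dγ vanishes on the constraint distribution
      ∧ (∀ q : Fin 4 → ℝ, ∀ u ∈ diskD R q, ∀ v ∈ diskD R q,
          fderiv ℝ (diskGamma m I R γφ0 γψ0) q u ⬝ᵥ v
            - fderiv ℝ (diskGamma m I R γφ0 γψ0) q v ⬝ᵥ u = 0) := by
  refine ⟨fun q => hE ▸ diskH_diskGamma hI.ne' m J R γφ0 γψ0 q, fun q u hu v hv => ?_⟩
  rw [fderiv_diskGamma_dotProduct_eq_zero m I R γφ0 γψ0 hv,
    fderiv_diskGamma_dotProduct_eq_zero m I R γφ0 γψ0 hu, sub_self]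

theorem statement16 (m I J R : ℝ) (hm : 0 < m) (hI : 0 < I) (hJ : 0 < J) (hR : 0 < R)
    (γφ0 γψ0 E : ℝ)
    (hE : (1 / 2) * (γφ0 ^ 2 / J + (I + m * R ^ 2) * γψ0 ^ 2 / I ^ 2) = E) :
    -- (i) the nonholonomic Hamilton–Jacobi equation
    (∀ q : Fin 4 → ℝ, diskH m I J (diskGamma m I R γφ0 γψ0 q) = E)
      -- (ii) dγ vanishes on the constraint distribution
      ∧ (∀ q : Fin 4 → ℝ, ∀ u ∈ diskD R q, ∀ v ∈ diskD R q,
          fderiv ℝ (diskGamma m I R γφ0 γψ0) q u ⬝ᵥ v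
            - fderiv ℝ (diskGamma m I R γφ0 γψ0) q v ⬝ᵥ u = 0) :=
  statement16_general m I J R hI γφ0 γψ0 E hE
end
end
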